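/- Let M be a gr-comultiplication Γ-module such that for every graded prime ideal P of Γ containing Ann_Γ(M) there exists a gr-second submodule N of M with Ann_Γ(N) = P (i.e., the natural map of GSpec^s(M) is surjective). If S is a gr-C-2^A-secondary submodule of M, then GSec(S) is a gr-S-2^A-second submodule of M. -/

import Mathlib

open Pointwise DirectSum

section Preliminaries

variable {G : Type*} [AddGroup G] [DecidableEq G]
variable {Γ : Type*} [CommRing Γ]
variable {M : Type*} [AddCommGroup M] [Module Γ M]

/-- `x` lies in the graded radical `Gr I`: for homogeneous `x` this is the defining
condition that some positive power of `x` lies in `I`. -/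
def grMem (I : Ideal Γ) (x : Γ) : Prop := ∃ n : ℕ, 0 < n ∧ x ^ n ∈ I

variable (𝒜 : G → AddSubgroup Γ) (ℳ : G → AddSubgroup M)
variable [GradedRing 𝒜] [DirectSum.Decomposition ℳ] [SetLike.GradedSMul 𝒜 ℳ]

/-- A graded submodule: closed under taking homogeneous components. -/
def IsGradedSubmodule (S : Submodule Γ M) : Prop :=
  ∀ (g : G) ⦃x : M⦄, x ∈ S → (DirectSum.decompose ℳ x g : M) ∈ S

/-- A graded ideal: closed under taking homogeneous components. -/
def IsGradedIdeal (I : Ideal Γ) : Prop :=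
  ∀ (g : G) ⦃x : Γ⦄, x ∈ I → (DirectSum.decompose 𝒜 x g : Γ) ∈ I

/-- A graded classical 2-absorbing secondary (gr-C-2^A-secondary) submodule:
a nonzero graded submodule `S` such that whenever `r, s` are homogeneous and `L` is a
graded submodule with `r*s • S ⊆ L`, either `r • S ⊆ L`, or `s • S ⊆ L`, or
`r*s ∈ Gr(Ann S)`. -/
def IsGrC2ASecondary (S : Submodule Γ M) : Prop :=
  S ≠ ⊥ ∧ IsGradedSubmodule ℳ S ∧
    ∀ r s : Γ, SetLike.IsHomogeneousElem 𝒜 r → SetLike.IsHomogeneousElem 𝒜 s →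
      ∀ L : Submodule Γ M, IsGradedSubmodule ℳ L →
        (r * s) • S ≤ L →
          r • S ≤ L ∨ s • S ≤ L ∨ grMem S.annihilator (r * s)

end Preliminaries

variable {G : Type*} [AddGroup G] [DecidableEq G]
variable {Γ : Type*} [CommRing Γ]
variable {M : Type*} [AddCommGroup M] [Module Γ M]
variable (𝒜 : G → AddSubgroup Γ) (ℳ : G → AddSubgroup M)
variable [GradedRing 𝒜] [DirectSum.Decomposition ℳ] [SetLike.GradedSMul 𝒜 ℳ]

/-- A graded prime ideal: a proper graded ideal such that for homogeneous `a, b`,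
`a*b ∈ P` implies `a ∈ P` or `b ∈ P`. -/
def IsGradedPrime (P : Ideal Γ) : Prop :=
  IsGradedIdeal 𝒜 P ∧ P ≠ ⊤ ∧
    ∀ a b : Γ, SetLike.IsHomogeneousElem 𝒜 a → SetLike.IsHomogeneousElem 𝒜 b →
      a * b ∈ P → a ∈ P ∨ b ∈ P

/-- A gr-second submodule: a nonzero graded submodule `N` such that every homogeneous
`r` satisfies `r • N = N` or `r • N = 0`. -/
def IsGrSecond (N : Submodule Γ M) : Prop :=
  N ≠ ⊥ ∧ IsGradedSubmodule ℳ N ∧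
    ∀ r : Γ, SetLike.IsHomogeneousElem 𝒜 r → r • N = N ∨ r • N = ⊥

/-- `GSec S`: the sum of all gr-second submodules of `M` contained in `S`. -/
def GSec (S : Submodule Γ M) : Submodule Γ M :=
  sSup {N : Submodule Γ M | IsGrSecond 𝒜 ℳ N ∧ N ≤ S}

/-- A completely graded irreducible submodule: a proper graded submodule `V` such that
whenever `V` is the intersection of a family of graded submodules, `V` is a member of
that family. -/
def IsCGIrreducible (V : Submodule Γ M) : Prop :=
  V ≠ ⊤ ∧ IsGradedSubmodule ℳ V ∧
    ∀ F : Set (Submodule Γ M), (∀ W ∈ F, IsGradedSubmodule ℳ W) →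
      V = sInf F → V ∈ F

/-- A graded strongly 2-absorbing second (gr-S-2^A-second) submodule. -/
def IsGrS2ASecond (N : Submodule Γ M) : Prop :=
  N ≠ ⊥ ∧ IsGradedSubmodule ℳ N ∧
    ∀ a b : Γ, SetLike.IsHomogeneousElem 𝒜 a → SetLike.IsHomogeneousElem 𝒜 b →
      ∀ V₁ V₂ : Submodule Γ M, IsCGIrreducible ℳ V₁ → IsCGIrreducible ℳ V₂ →
        (a * b) • N ≤ V₁ ⊓ V₂ →
          a • N ≤ V₁ ⊓ V₂ ∨ b • N ≤ V₁ ⊓ V₂ ∨ a * b ∈ N.annihilator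

/-!
By surjectivity every graded prime `P ⊇ Ann S` is `Ann N` for a gr-second `N`, and comultiplication
turns `Ann S ≤ Ann N` into `N ≤ S`; in particular `GSec S ≠ 0`. For the absorbing property apply the
gr-C-2^A-secondary condition to `L = (a b) S`. If `a S ≤ (a b) S`, every gr-second `N ≤ S` with
`a N = N` satisfies `N ≤ (a b)^k S` for all `k`, so `Ann S` misses the multiplicative set generated
by `a b` and the homogeneous elements outside `Ann N`. A graded prime `P ⊇ Ann S` avoiding it lies
in `Ann N` and misses `a b`, so the gr-second submodule realising `P` contains `N`, lies in `S` and
is fixed by `a b`; hence `N ≤ (a b) GSec S`. If instead `(a b)^n ∈ Ann S`, then `a b` kills every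
gr-second submodule of `S`, since their annihilators are graded prime.
-/

namespace DirectSum

theorem coe_decompose_smul_add_of_right_mem (r : Γ) {j : G} {m : M} (hm : m ∈ ℳ j) (g : G) :
    (decompose ℳ (r • m) (g + j) : M) = (decompose 𝒜 r g : Γ) • m := by
  classical
  conv_lhs => rw [← sum_support_decompose 𝒜 r, Finset.sum_smul]
  rw [decompose_sum, DFinsupp.finsetSum_apply, AddSubmonoidClass.coe_finsetSum,
    Finset.sum_eq_single g]
  · exact decompose_of_mem_same ℳ (SetLike.GradedSMul.smul_mem (decompose 𝒜 r g).2 hm)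
  · exact fun i _ hig => decompose_of_mem_ne ℳ
      (SetLike.GradedSMul.smul_mem (decompose 𝒜 r i).2 hm) (fun h => hig (add_right_cancel h))
  · intro hg
    rw [DFinsupp.notMem_support_iff.1 hg]
    simp

omit [GradedRing 𝒜] in
theorem coe_decompose_smul_add_of_left_mem {i : G} {r : Γ} (hr : r ∈ 𝒜 i) (m : M) (g : G) :
    (decompose ℳ (r • m) (i + g) : M) = r • (decompose ℳ m g : M) := by
  classical
  conv_lhs => rw [← sum_support_decompose ℳ m, Finset.smul_sum]
  rw [decompose_sum, DFinsupp.finsetSum_apply, AddSubmonoidClass.coe_finsetSum,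
    Finset.sum_eq_single g]
  · exact decompose_of_mem_same ℳ (SetLike.GradedSMul.smul_mem hr (decompose ℳ m g).2)
  · exact fun h _ hhg => decompose_of_mem_ne ℳ
      (SetLike.GradedSMul.smul_mem hr (decompose ℳ m h).2) (fun hh => hhg (add_left_cancel hh))
  · intro hg
    rw [DFinsupp.notMem_support_iff.1 hg]
    simp

end DirectSum

section

variable {𝒜 ℳ}

variable (𝒜) in
theorem isGradedIdeal_annihilator {S : Submodule Γ M} (hS : IsGradedSubmodule ℳ S) :
    IsGradedIdeal 𝒜 S.annihilator := by
  classical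
  intro g r hr
  rw [Submodule.mem_annihilator] at hr ⊢
  intro m hm
  rw [← sum_support_decompose ℳ m, Finset.smul_sum]
  refine Finset.sum_eq_zero fun j _ => ?_
  rw [← coe_decompose_smul_add_of_right_mem 𝒜 ℳ r (decompose ℳ m j).2 g, hr _ (hS j hm)]
  simp

omit [GradedRing 𝒜] in
theorem IsGradedSubmodule.smul {a : Γ} (ha : SetLike.IsHomogeneousElem 𝒜 a)
    {S : Submodule Γ M} (hS : IsGradedSubmodule ℳ S) : IsGradedSubmodule ℳ (a • S) := by
  obtain ⟨i, hai⟩ := ha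
  rintro g _ ⟨s, hs, rfl⟩
  have e := coe_decompose_smul_add_of_left_mem 𝒜 ℳ hai s (-i + g)
  rw [add_neg_cancel_left] at e
  rw [DistribSMul.toLinearMap_apply, e]
  exact Submodule.smul_mem_pointwise_smul _ _ _ (hS _ hs)

omit [AddGroup G] in
theorem isGradedSubmodule_sSup {s : Set (Submodule Γ M)} (hs : ∀ N ∈ s, IsGradedSubmodule ℳ N) :
    IsGradedSubmodule ℳ (sSup s) := by
  intro g x hx
  rw [sSup_eq_iSup'] at hx ⊢
  refine Submodule.iSup_induction _ (motive := fun y => (decompose ℳ y g : M) ∈ _) hx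
    (fun N y hy => Submodule.mem_iSup_of_mem N (hs N N.2 g hy)) (by simp) fun y z hy hz => ?_
  simpa only [decompose_add, DirectSum.add_apply, AddMemClass.coe_add] using add_mem hy hz

theorem IsGradedIdeal.le_of_forall_homogeneous {P Q : Ideal Γ} (hP : IsGradedIdeal 𝒜 P)
    (h : ∀ x, SetLike.IsHomogeneousElem 𝒜 x → x ∈ P → x ∈ Q) : P ≤ Q := by
  classical
  intro x hx
  rw [← sum_support_decompose 𝒜 x]
  exact Submodule.sum_mem _ fun g _ => h _ ⟨g, SetLike.coe_mem _⟩ (hP g hx)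

namespace Submodule

theorem pointwise_smul_eq_bot_of_mem_annihilator {r : Γ} {N : Submodule Γ M}
    (h : r ∈ N.annihilator) : r • N = ⊥ := by
  rw [eq_bot_iff]
  rintro _ ⟨m, hm, rfl⟩
  exact mem_annihilator.1 h m hm

theorem mem_annihilator_pointwise_smul_of_mul_mem {c t : Γ} {S : Submodule Γ M}
    (h : c * t ∈ S.annihilator) : t ∈ (c • S).annihilator := by
  rw [mem_annihilator]
  rintro _ ⟨m, hm, rfl⟩
  rw [DistribSMul.toLinearMap_apply, smul_smul, mul_comm]
  exact mem_annihilator.1 h m hm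

theorem le_pow_smul_of_smul_le {a c : Γ} {N S : Submodule Γ M} (haN : a • N = N) (hNS : N ≤ S)
    (h : a • S ≤ c • S) (k : ℕ) : N ≤ c ^ k • S := by
  induction k with
  | zero => rwa [pow_zero, one_smul]
  | succ k ih =>
    calc N = a • N := haN.symm
      _ ≤ a • c ^ k • S := smul_le_smul_left a ih
      _ = c ^ k • a • S := smul_comm a (c ^ k) S
      _ ≤ c ^ k • c • S := smul_le_smul_left _ h
      _ = c ^ (k + 1) • S := by rw [pow_succ, mul_smul]

end Submodule

namespace IsGradedPrime

theorem mem_of_pow_mem {P : Ideal Γ} (hP : IsGradedPrime 𝒜 P) {a : Γ}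
    (ha : SetLike.IsHomogeneousElem 𝒜 a) (n : ℕ) (h : a ^ n ∈ P) : a ∈ P := by
  induction n with
  | zero => exact absurd ((Ideal.eq_top_iff_one P).2 (pow_zero a ▸ h)) hP.2.1
  | succ n ih =>
    obtain ⟨i, hi⟩ := ha
    rw [pow_succ] at h
    exact (hP.2.2 _ a ⟨n • i, SetLike.pow_mem_graded n hi⟩ ⟨i, hi⟩ h).elim ih id

def homogeneousCompl {P : Ideal Γ} (hP : IsGradedPrime 𝒜 P) : Submonoid Γ where
  carrier := {t | SetLike.IsHomogeneousElem 𝒜 t ∧ t ∉ P}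
  one_mem' := ⟨SetLike.isHomogeneousElem_one 𝒜, (Ideal.ne_top_iff_one P).1 hP.2.1⟩
  mul_mem' := fun ⟨ha, haP⟩ ⟨hb, hbP⟩ =>
    ⟨ha.mul hb, fun hab => (hP.2.2 _ _ ha hb hab).elim haP hbP⟩

end IsGradedPrime

theorem exists_isGradedPrime_le_disjoint {I : Ideal Γ} (hI : IsGradedIdeal 𝒜 I) (T : Submonoid Γ)
    (hIT : Disjoint (I : Set Γ) T) :
    ∃ P : Ideal Γ, IsGradedPrime 𝒜 P ∧ I ≤ P ∧ Disjoint (P : Set Γ) T := by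
  obtain ⟨Q, hQ, hIQ, hQT⟩ := Ideal.exists_le_prime_disjoint I T hIT
  have hcore : (Q.homogeneousCore 𝒜).toIdeal ≤ Q := Q.toIdeal_homogeneousCore_le 𝒜
  refine ⟨(Q.homogeneousCore 𝒜).toIdeal,
    ⟨(Q.homogeneousCore 𝒜).isHomogeneous, fun h => hQ.ne_top (top_le_iff.1 (h ▸ hcore)), ?_⟩,
    ?_, hQT.mono_left hcore⟩
  · exact fun a b ha hb hab => (hQ.mem_or_mem (hcore hab)).imp
      (Ideal.mem_homogeneousCore_of_homogeneous_of_mem ha)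
      (Ideal.mem_homogeneousCore_of_homogeneous_of_mem hb)
  · rw [← Ideal.IsHomogeneous.toIdeal_homogeneousCore_eq_self (𝒜 := 𝒜) hI]
    exact Ideal.homogeneousCore_mono 𝒜 hIQ

namespace IsGrSecond

variable {N : Submodule Γ M} (hN : IsGrSecond 𝒜 ℳ N)
include hN

omit [AddGroup G] [GradedRing 𝒜] [SetLike.GradedSMul 𝒜 ℳ] in
theorem smul_eq_self {r : Γ} (hr : SetLike.IsHomogeneousElem 𝒜 r) (h : r ∉ N.annihilator) :
    r • N = N := by
  refine (hN.2.2 r hr).resolve_right fun hbot => h ?_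
  rw [Submodule.mem_annihilator]
  intro m hm
  have hrm := Submodule.smul_mem_pointwise_smul m r N hm
  rwa [hbot, Submodule.mem_bot] at hrm

theorem isGradedPrime_annihilator : IsGradedPrime 𝒜 N.annihilator := by
  refine ⟨isGradedIdeal_annihilator 𝒜 hN.2.1, Submodule.annihilator_eq_top_iff.not.2 hN.1,
    fun a b ha hb hab => ?_⟩
  by_contra! h
  apply hN.1
  rw [← Submodule.pointwise_smul_eq_bot_of_mem_annihilator hab, mul_smul,
    hN.smul_eq_self hb h.2, hN.smul_eq_self ha h.1]

end IsGrSecond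

section GSec

omit [AddGroup G] [GradedRing 𝒜] [SetLike.GradedSMul 𝒜 ℳ]

variable {S : Submodule Γ M}

theorem le_GSec {N : Submodule Γ M} (hN : IsGrSecond 𝒜 ℳ N) (hNS : N ≤ S) : N ≤ GSec 𝒜 ℳ S :=
  le_sSup ⟨hN, hNS⟩

theorem smul_GSec_le_iff {a : Γ} {L : Submodule Γ M} :
    a • GSec 𝒜 ℳ S ≤ L ↔ ∀ N : Submodule Γ M, IsGrSecond 𝒜 ℳ N → N ≤ S → a • N ≤ L := by
  rw [GSec, sSup_eq_iSup', Submodule.smul_iSup', iSup_le_iff, Subtype.forall]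
  exact forall_congr' fun N => ⟨fun h hN hNS => h ⟨hN, hNS⟩, fun h hN => h hN.1 hN.2⟩

theorem mem_annihilator_GSec_iff {r : Γ} :
    r ∈ (GSec 𝒜 ℳ S).annihilator ↔
      ∀ N : Submodule Γ M, IsGrSecond 𝒜 ℳ N → N ≤ S → r ∈ N.annihilator := by
  rw [GSec, sSup_eq_iSup', Submodule.annihilator_iSup, Submodule.mem_iInf, Subtype.forall]
  exact forall_congr' fun N => ⟨fun h hN hNS => h ⟨hN, hNS⟩, fun h hN => h hN.1 hN.2⟩

theorem isGradedSubmodule_GSec : IsGradedSubmodule ℳ (GSec 𝒜 ℳ S) :=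
  isGradedSubmodule_sSup fun _ hN => hN.1.2.1

end GSec

variable (Γ ℳ) in
def IsGrComultiplication : Prop :=
  ∀ N : Submodule Γ M, IsGradedSubmodule ℳ N →
    N = Submodule.torsionBySet Γ M (N.annihilator : Set Γ)

variable (𝒜 ℳ) in
def IsGrSecondSpecSurjective : Prop :=
  ∀ P : Ideal Γ, IsGradedPrime 𝒜 P → (⊤ : Submodule Γ M).annihilator ≤ P →
    ∃ N : Submodule Γ M, IsGrSecond 𝒜 ℳ N ∧ N.annihilator = P

namespace IsGrComultiplication

variable (hcomul : IsGrComultiplication Γ ℳ)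
include hcomul

omit [AddGroup G] [GradedRing 𝒜] [SetLike.GradedSMul 𝒜 ℳ] in
theorem le_of_annihilator_le {N N' : Submodule Γ M} (hN : IsGradedSubmodule ℳ N)
    (hN' : IsGradedSubmodule ℳ N') (h : N'.annihilator ≤ N.annihilator) : N ≤ N' :=
  calc N = Submodule.torsionBySet Γ M (N.annihilator : Set Γ) := hcomul N hN
    _ ≤ Submodule.torsionBySet Γ M (N'.annihilator : Set Γ) :=
      Submodule.torsionBySet_le_torsionBySet_of_subset h
    _ = N' := (hcomul N' hN').symm

variable (hsurj : IsGrSecondSpecSurjective 𝒜 ℳ)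
include hsurj

omit [SetLike.GradedSMul 𝒜 ℳ] in
theorem exists_isGrSecond_le_annihilator_eq {S : Submodule Γ M} (hS : IsGradedSubmodule ℳ S)
    {P : Ideal Γ} (hP : IsGradedPrime 𝒜 P) (hSP : S.annihilator ≤ P) :
    ∃ N : Submodule Γ M, IsGrSecond 𝒜 ℳ N ∧ N ≤ S ∧ N.annihilator = P := by
  obtain ⟨N, hN, hNP⟩ := hsurj P hP ((Submodule.annihilator_mono le_top).trans hSP)
  exact ⟨N, hN, hcomul.le_of_annihilator_le hN.2.1 hS (hNP ▸ hSP), hNP⟩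

theorem GSec_ne_bot {S : Submodule Γ M} (hS : IsGradedSubmodule ℳ S) (hS0 : S ≠ ⊥) :
    GSec 𝒜 ℳ S ≠ ⊥ := by
  have h1 : Disjoint (S.annihilator : Set Γ) (⊥ : Submonoid Γ) := by
    rw [Submonoid.coe_bot, Set.disjoint_singleton_right, SetLike.mem_coe,
      ← Ideal.eq_top_iff_one, Submodule.annihilator_eq_top_iff]
    exact hS0
  obtain ⟨P, hP, hSP, -⟩ := exists_isGradedPrime_le_disjoint (isGradedIdeal_annihilator 𝒜 hS) ⊥ h1
  obtain ⟨N, hN, hNS, -⟩ := hcomul.exists_isGrSecond_le_annihilator_eq hsurj hS hP hSP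
  exact fun hbot => hN.1 (le_bot_iff.1 (hbot ▸ le_GSec hN hNS))

theorem le_smul_GSec_of_smul_le {S N : Submodule Γ M} (hS : IsGradedSubmodule ℳ S) {a b : Γ}
    (ha : SetLike.IsHomogeneousElem 𝒜 a) (hb : SetLike.IsHomogeneousElem 𝒜 b)
    (hN : IsGrSecond 𝒜 ℳ N) (hNS : N ≤ S) (haN : a • N = N) (h : a • S ≤ (a * b) • S) :
    N ≤ (a * b) • GSec 𝒜 ℳ S := by
  set T := Submonoid.powers (a * b) ⊔ hN.isGradedPrime_annihilator.homogeneousCompl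
  have hST : Disjoint (S.annihilator : Set Γ) T := by
    refine Set.disjoint_right.2 fun x hxT hxS => ?_
    obtain ⟨_, ⟨k, rfl⟩, t, ⟨-, htN⟩, rfl⟩ := Submonoid.mem_sup.1 hxT
    exact htN (Submodule.annihilator_mono (Submodule.le_pow_smul_of_smul_le haN hNS h k)
      (Submodule.mem_annihilator_pointwise_smul_of_mul_mem hxS))
  obtain ⟨P, hP, hSP, hPT⟩ :=
    exists_isGradedPrime_le_disjoint (isGradedIdeal_annihilator 𝒜 hS) T hST
  obtain ⟨N', hN', hN'S, rfl⟩ := hcomul.exists_isGrSecond_le_annihilator_eq hsurj hS hP hSP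
  have hPN : N'.annihilator ≤ N.annihilator := hP.1.le_of_forall_homogeneous fun x hx hxP =>
    by_contra fun hxN => Set.disjoint_left.1 hPT hxP (Submonoid.mem_sup_right ⟨hx, hxN⟩)
  have habN' : (a * b) • N' = N' := hN'.smul_eq_self (ha.mul hb) fun habP =>
    Set.disjoint_left.1 hPT habP (Submonoid.mem_sup_left (Submonoid.mem_powers _))
  calc N ≤ N' := hcomul.le_of_annihilator_le hN.2.1 hN'.2.1 hPN
    _ = (a * b) • N' := habN'.symm
    _ ≤ (a * b) • GSec 𝒜 ℳ S := smul_le_smul_left _ (le_GSec hN' hN'S)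

theorem smul_GSec_le_of_smul_le {S : Submodule Γ M} (hS : IsGradedSubmodule ℳ S) {a b : Γ}
    (ha : SetLike.IsHomogeneousElem 𝒜 a) (hb : SetLike.IsHomogeneousElem 𝒜 b)
    (h : a • S ≤ (a * b) • S) {L : Submodule Γ M} (hL : (a * b) • GSec 𝒜 ℳ S ≤ L) :
    a • GSec 𝒜 ℳ S ≤ L := by
  refine smul_GSec_le_iff.2 fun N hN hNS => ?_
  rcases hN.2.2 a ha with haN | haN
  · rw [haN]
    exact (hcomul.le_smul_GSec_of_smul_le hsurj hS ha hb hN hNS haN h).trans hL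
  · rw [haN]
    exact bot_le

end IsGrComultiplication

theorem IsGrC2ASecondary.smul_GSec_le_or_mem_annihilator {S : Submodule Γ M}
    (hS : IsGrC2ASecondary 𝒜 ℳ S) (hcomul : IsGrComultiplication Γ ℳ)
    (hsurj : IsGrSecondSpecSurjective 𝒜 ℳ) {a b : Γ} (ha : SetLike.IsHomogeneousElem 𝒜 a)
    (hb : SetLike.IsHomogeneousElem 𝒜 b) {L : Submodule Γ M}
    (hL : (a * b) • GSec 𝒜 ℳ S ≤ L) :
    a • GSec 𝒜 ℳ S ≤ L ∨ b • GSec 𝒜 ℳ S ≤ L ∨ a * b ∈ (GSec 𝒜 ℳ S).annihilator := by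
  rcases hS.2.2 a b ha hb _ (hS.2.1.smul (ha.mul hb)) le_rfl with h | h | ⟨n, -, hn⟩
  · exact .inl (hcomul.smul_GSec_le_of_smul_le hsurj hS.2.1 ha hb h hL)
  · refine .inr (.inl ?_)
    rw [mul_comm] at h hL
    exact hcomul.smul_GSec_le_of_smul_le hsurj hS.2.1 hb ha h hL
  · refine .inr (.inr (mem_annihilator_GSec_iff.2 fun N hN hNS => ?_))
    exact hN.isGradedPrime_annihilator.mem_of_pow_mem (ha.mul hb) n
      (Submodule.annihilator_mono hNS hn)

end

/-- If `M` is a gr-comultiplication module whose natural map on the graded second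
spectrum is surjective, and `S` is a gr-C-2^A-secondary submodule of `M`, then
`GSec S` is a gr-S-2^A-second submodule of `M`. -/
theorem stmt6
    (hcomul : ∀ N : Submodule Γ M, IsGradedSubmodule ℳ N →
      N = Submodule.torsionBySet Γ M (N.annihilator : Set Γ))
    (hsurj : ∀ P : Ideal Γ, IsGradedPrime 𝒜 P →
      (⊤ : Submodule Γ M).annihilator ≤ P →
      ∃ N : Submodule Γ M, IsGrSecond 𝒜 ℳ N ∧ N.annihilator = P)
    (S : Submodule Γ M) (hS : IsGrC2ASecondary 𝒜 ℳ S) :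
    IsGrS2ASecond 𝒜 ℳ (GSec 𝒜 ℳ S) :=
  ⟨IsGrComultiplication.GSec_ne_bot hcomul hsurj hS.2.1 hS.1, isGradedSubmodule_GSec,
    fun _ _ ha hb _ _ _ _ hab => hS.smul_GSec_le_or_mem_annihilator hcomul hsurj ha hb hab⟩
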